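/- arXiv:2012.06924 — 2 statements merged into one kernel-verified Lean document; each statement's English description precedes it below -/
import Mathlib

section
/- Let A_0, A_1, …, A_L ∈ ℝ^{n×n} be entrywise nonnegative matrices and let 𝒜 be the associated delay block matrix. If ρ(𝒜) = 0, then ρ(∑_{ℓ=0}^L A_ℓ) = 0. -/
/-!
A real matrix has spectral radius zero exactly when it is nilpotent, so it suffices to show that
`S = ∑ A ℓ` is nilpotent when `𝒜` is. Walking down the identity blocks of `𝒜` from block `ℓ` to
block `0` gives `A ℓ ≤ (𝒜 ^ (ℓ + 1))₀₀` entrywise, hence `S` is dominated entrywise by the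
`(0, 0)` block of `D = ∑ ℓ, 𝒜 ^ (ℓ + 1)`, which is nilpotent as a sum of commuting nilpotents.
For nonnegative matrices, domination by a principal submatrix passes to all powers, so `S ^ k = 0`
as soon as `D ^ k = 0`.
-/

open Matrix BigOperators

/-- The spectral radius of a real square matrix: the maximum modulus of its
complex eigenvalues. -/
noncomputable def specRad {m : Type*} [Fintype m] [DecidableEq m]
    (A : Matrix m m ℝ) : ℝ :=
  (spectralRadius ℂ (A.map (algebraMap ℝ ℂ))).toReal

/-- The delay block matrix associated to matrices `A 0, …, A L`: first block row
`(A 0  A 1 ⋯ A L)`, identity matrices on the block subdiagonal, zeros elsewhere. -/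
def delayBlock {n L : ℕ} (A : Fin (L + 1) → Matrix (Fin n) (Fin n) ℝ) :
    Matrix (Fin n × Fin (L + 1)) (Fin n × Fin (L + 1)) ℝ :=
  fun p q =>
    if (p.2 : ℕ) = 0 then A q.2 p.1 q.1
    else if p.1 = q.1 ∧ (q.2 : ℕ) + 1 = (p.2 : ℕ) then 1 else 0

open Polynomial in
theorem Matrix.isNilpotent_iff_spectrum_subset_zero {K m : Type*} [Field K] [IsAlgClosed K]
    [Fintype m] [DecidableEq m] (B : Matrix m m K) : IsNilpotent B ↔ spectrum K B ⊆ {0} := by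
  constructor
  · rintro hB μ hμ
    by_contra hμ0
    refine spectrum.notMem_iff.mpr ?_ hμ
    rw [sub_eq_add_neg]
    exact hB.neg.isUnit_add_left_of_commute ((Ne.isUnit hμ0).map _) (Algebra.commutes μ _).symm
  · intro hs
    have hroots : B.charpoly.roots = Multiset.replicate B.charpoly.roots.card 0 :=
      Multiset.eq_replicate_card.mpr fun r hr =>
        hs (B.mem_spectrum_iff_isRoot_charpoly.mpr (isRoot_of_mem_roots hr))
    have hX : B.charpoly = X ^ B.charpoly.roots.card := by
      rw [(IsAlgClosed.splits B.charpoly).eq_prod_roots_of_monic B.charpoly_monic, hroots]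
      simp
    have hCH := B.aeval_self_charpoly
    rw [hX, map_pow, aeval_X] at hCH
    exact ⟨_, hCH⟩

theorem specRad_eq_zero_iff_isNilpotent {m : Type*} [Fintype m] [DecidableEq m]
    (B : Matrix m m ℝ) : specRad B = 0 ↔ IsNilpotent B := by
  set Bℂ := B.map (algebraMap ℝ ℂ)
  have : Finite (spectrum ℂ Bℂ) := Bℂ.finite_spectrum
  have hne_top : spectralRadius ℂ Bℂ ≠ ⊤ := by
    rw [spectralRadius, iSup_subtype']
    exact iSup_ne_top fun _ => ENNReal.coe_ne_top
  have hmap : IsNilpotent Bℂ ↔ IsNilpotent B :=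
    IsNilpotent.map_iff (f := (algebraMap ℝ ℂ).mapMatrix)
      (Matrix.map_injective (FaithfulSMul.algebraMap_injective ℝ ℂ))
  rw [specRad, ENNReal.toReal_eq_zero_iff, or_iff_left hne_top, ← hmap,
    Bℂ.isNilpotent_iff_spectrum_subset_zero, spectralRadius, ← bot_eq_zero, iSup₂_eq_bot]
  simp [Set.subset_def, Bℂ]

namespace Matrix

variable {R m m' : Type*} [Semiring R] [PartialOrder R] [IsOrderedRing R]
  [Fintype m] [Fintype m']

theorem mul_apply_le_mul_apply {M N : Matrix m m R} (hM : ∀ i j, 0 ≤ M i j)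
    (hN : ∀ i j, 0 ≤ N i j) (i t j : m) : M i t * N t j ≤ (M * N) i j :=
  Finset.single_le_sum (f := fun s => M i s * N s j)
    (fun s _ => mul_nonneg (hM i s) (hN s j)) (Finset.mem_univ t)

theorem pow_apply_le_of_le_submatrix [DecidableEq m] [DecidableEq m'] {M : Matrix m m R}
    {N : Matrix m' m' R} {f : m → m'} (hf : Function.Injective f) (hM : ∀ i j, 0 ≤ M i j)
    (hN : ∀ i j, 0 ≤ N i j) (hMN : ∀ i j, M i j ≤ N (f i) (f j)) (k : ℕ) (i j : m) :
    (M ^ k) i j ≤ (N ^ k) (f i) (f j) := by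
  induction k generalizing i j with
  | zero => simp only [pow_zero, one_apply, hf.eq_iff]; rfl
  | succ k ih =>
    rw [pow_succ', pow_succ', mul_apply, mul_apply]
    calc ∑ t, M i t * (M ^ k) t j ≤ ∑ t, N (f i) (f t) * (N ^ k) (f t) (f j) :=
          Finset.sum_le_sum fun t _ =>
            mul_le_mul (hMN i t) (ih t j) (pow_apply_nonneg hM k t j) (hN _ _)
      _ ≤ ∑ s, N (f i) s * (N ^ k) s (f j) := by
          rw [← Finset.sum_image (g := f) (f := fun s => N (f i) s * (N ^ k) s (f j))
            fun a _ b _ h => hf h]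
          exact Finset.sum_le_sum_of_subset_of_nonneg (Finset.subset_univ _)
            fun s _ _ => mul_nonneg (hN _ _) (pow_apply_nonneg hN k s (f j))

theorem isNilpotent_of_le_submatrix [DecidableEq m] [DecidableEq m'] {M : Matrix m m R}
    {N : Matrix m' m' R} {f : m → m'} (hf : Function.Injective f) (hM : ∀ i j, 0 ≤ M i j)
    (hN : ∀ i j, 0 ≤ N i j) (hMN : ∀ i j, M i j ≤ N (f i) (f j)) (hNnil : IsNilpotent N) :
    IsNilpotent M := by
  obtain ⟨k, hk⟩ := hNnil
  refine ⟨k, ext fun i j => le_antisymm ?_ (pow_apply_nonneg hM k i j)⟩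
  simpa [hk] using pow_apply_le_of_le_submatrix hf hM hN hMN k i j

end Matrix

section DelayBlock

variable {n L : ℕ} {A : Fin (L + 1) → Matrix (Fin n) (Fin n) ℝ}

theorem delayBlock_nonneg (hA : ∀ ℓ i j, 0 ≤ A ℓ i j) (p q : Fin n × Fin (L + 1)) :
    0 ≤ delayBlock A p q := by
  unfold delayBlock
  split_ifs <;> simp [hA]

theorem delayBlock_apply_zero (ℓ : Fin (L + 1)) (i j : Fin n) :
    delayBlock A (i, 0) (j, ℓ) = A ℓ i j :=
  if_pos rfl

theorem delayBlock_apply_succ {a b : Fin (L + 1)} (hab : (b : ℕ) + 1 = a) (j : Fin n) :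
    delayBlock A (j, a) (j, b) = 1 := by
  unfold delayBlock
  rw [if_neg (by dsimp only; omega), if_pos ⟨rfl, hab⟩]

theorem one_le_delayBlock_pow_apply (hA : ∀ ℓ i j, 0 ≤ A ℓ i j) (j : Fin n) (k : ℕ)
    {a b : Fin (L + 1)} (hab : (b : ℕ) + k = a) : 1 ≤ (delayBlock A ^ k) (j, a) (j, b) := by
  induction k generalizing a with
  | zero => rw [pow_zero, Fin.ext (by omega : (a : ℕ) = b), one_apply_eq]
  | succ k ih =>
    let c : Fin (L + 1) := ⟨b + k, by omega⟩
    calc (1 : ℝ) ≤ delayBlock A (j, a) (j, c) * (delayBlock A ^ k) (j, c) (j, b) := by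
          rw [delayBlock_apply_succ (by simp [c]; omega), one_mul]; exact ih rfl
      _ ≤ (delayBlock A ^ (k + 1)) (j, a) (j, b) := by
          rw [pow_succ']
          exact mul_apply_le_mul_apply (delayBlock_nonneg hA)
            (pow_apply_nonneg (delayBlock_nonneg hA) k) _ _ _

theorem le_delayBlock_pow_apply (hA : ∀ ℓ i j, 0 ≤ A ℓ i j) (ℓ : Fin (L + 1)) (i j : Fin n) :
    A ℓ i j ≤ (delayBlock A ^ ((ℓ : ℕ) + 1)) (i, 0) (j, 0) :=
  calc A ℓ i j ≤ delayBlock A (i, 0) (j, ℓ) * (delayBlock A ^ (ℓ : ℕ)) (j, ℓ) (j, 0) := by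
        rw [delayBlock_apply_zero]
        exact le_mul_of_one_le_right (hA ℓ i j) (one_le_delayBlock_pow_apply hA j ℓ (by simp))
    _ ≤ (delayBlock A ^ ((ℓ : ℕ) + 1)) (i, 0) (j, 0) := by
        rw [pow_succ']
        exact mul_apply_le_mul_apply (delayBlock_nonneg hA)
          (pow_apply_nonneg (delayBlock_nonneg hA) _) _ _ _

theorem sum_apply_le_sum_delayBlock_pow_apply (hA : ∀ ℓ i j, 0 ≤ A ℓ i j) (i j : Fin n) :
    (∑ ℓ, A ℓ) i j ≤ (∑ ℓ : Fin (L + 1), delayBlock A ^ ((ℓ : ℕ) + 1)) (i, 0) (j, 0) := by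
  rw [Matrix.sum_apply, Matrix.sum_apply]
  exact Finset.sum_le_sum fun ℓ _ => le_delayBlock_pow_apply hA ℓ i j

end DelayBlock

theorem stmt1 {n L : ℕ}
    (A : Fin (L + 1) → Matrix (Fin n) (Fin n) ℝ)
    (hA : ∀ ℓ i j, 0 ≤ A ℓ i j)
    (h : specRad (delayBlock A) = 0) :
    specRad (∑ ℓ, A ℓ) = 0 := by
  have h𝒜 : IsNilpotent (delayBlock A) := (specRad_eq_zero_iff_isNilpotent _).mp h
  have hD : IsNilpotent (∑ ℓ : Fin (L + 1), delayBlock A ^ ((ℓ : ℕ) + 1)) :=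
    Commute.isNilpotent_sum (fun ℓ _ => h𝒜.pow_succ _) fun _ _ _ _ => Commute.pow_pow_self _ _ _
  rw [specRad_eq_zero_iff_isNilpotent]
  refine isNilpotent_of_le_submatrix (Prod.mk_left_injective 0)
    (fun i j => ?_) (fun p q => ?_) (sum_apply_le_sum_delayBlock_pow_apply hA) hD
  · rw [Matrix.sum_apply]; exact Finset.sum_nonneg fun ℓ _ => hA ℓ i j
  · rw [Matrix.sum_apply]
    exact Finset.sum_nonneg fun ℓ _ => pow_apply_nonneg (delayBlock_nonneg hA) _ p q
end

section
/- Let S be a finite family of entrywise nonnegative matrices in ℝ^{n×n} and μ : S → [0,1] with ∑_{A∈S} μ(A) = 1 and μ(A) > 0 for each A ∈ S. Then the limit lim_{k→∞} (∑_{w ∈ S^k} (∏_{m=1}^k μ(w_m)) ‖A_{w_k} ⋯ A_{w_1}‖)^{1/k} exists and equals ρ(E_μ[S]), the spectral radius of the expectation matrix E_μ[S] = ∑_{A∈S} μ(A) A, where ‖·‖ is the ℓ∞ operator norm (maximum absolute row sum). -/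
open Matrix BigOperators

/-- Ordered matrix product `A (w (k-1)) * ⋯ * A (w 0)` along a word `w`
(i.e. `A_{w_k} ⋯ A_{w_1}` with 1-based indexing). -/
def wordProd {n k : ℕ} {ι : Type*} (A : ι → Matrix (Fin n) (Fin n) ℝ)
    (w : Fin k → ι) : Matrix (Fin n) (Fin n) ℝ :=
  ((List.ofFn fun m => A (w m)).reverse).prod

/-- The ℓ∞ operator norm of a real matrix: the maximum absolute row sum. -/
noncomputable def rowSumNorm {n : ℕ} (B : Matrix (Fin n) (Fin n) ℝ) : ℝ :=
  ⨆ i, ∑ j, |B i j|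

/-!
Write `M = ∑ μ f • A f`. Expanding `M ^ k` gives `∑_w μ(w) • A_w`, so the triangle inequality
yields `‖M ^ k‖ ≤ ∑_w μ(w) ‖A_w‖`. Conversely, for entrywise nonnegative matrices the ℓ∞ operator
norm is at most the sum of all entries, which is linear, so `∑_w μ(w) ‖A_w‖` is at most the entry
sum of `M ^ k`, hence at most `n ‖M ^ k‖`. The constant `n` disappears under `k`-th roots, and
Gelfand's formula, applied to the complexification of `M`, gives `‖M ^ k‖ ^ (1/k) → ρ(M)`.
-/

open Filter Topology

attribute [local instance] Matrix.linftyOpNormedAddCommGroup Matrix.linftyOpNormedRing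
  Matrix.linftyOpNormedAlgebra

theorem Matrix.mul_apply_nonneg {R l m n : Type*} [Fintype m] [Semiring R] [PartialOrder R]
    [IsOrderedRing R] {B : Matrix l m R} {C : Matrix m n R} (hB : ∀ i j, 0 ≤ B i j)
    (hC : ∀ i j, 0 ≤ C i j) (i : l) (j : n) : 0 ≤ (B * C) i j :=
  Finset.sum_nonneg fun x _ => mul_nonneg (hB i x) (hC x j)

section WordProd

variable {n : ℕ} {ι : Type*} (A : ι → Matrix (Fin n) (Fin n) ℝ)

theorem wordProd_cons {k : ℕ} (f : ι) (w : Fin k → ι) :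
    wordProd A (Fin.cons f w) = wordProd A w * A f := by
  simp [wordProd, List.ofFn_succ, Fin.cons_succ]

theorem wordProd_nonneg (hA : ∀ f i j, 0 ≤ A f i j) {k : ℕ} (w : Fin k → ι) (i j : Fin n) :
    0 ≤ wordProd A w i j := by
  induction w using Fin.consInduction generalizing i j with
  | elim0 => by_cases h : i = j <;> simp [wordProd, one_apply, h]
  | cons f w ih => rw [wordProd_cons]; exact mul_apply_nonneg ih (hA f) i j

theorem sum_prod_smul_wordProd [Fintype ι] (μ : ι → ℝ) (k : ℕ) :
    ∑ w : Fin k → ι, (∏ m, μ (w m)) • wordProd A w = (∑ f, μ f • A f) ^ k := by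
  induction k with
  | zero => simp [wordProd]
  | succ k ih =>
    rw [← (Fin.consEquiv fun _ => ι).sum_comp, Fintype.sum_prod_type, Finset.sum_comm,
      pow_succ, ← ih, Finset.sum_mul_sum]
    refine Finset.sum_congr rfl fun w _ => Finset.sum_congr rfl fun f _ => ?_
    simp [Fin.consEquiv, wordProd_cons, Fin.prod_univ_succ, mul_smul]

end WordProd

section LinftyOpNorm

variable {m n : Type*} [Fintype m] [Fintype n]

theorem Matrix.linfty_opNorm_eq_ciSup {α : Type*} [NormedAddCommGroup α]
    (B : Matrix m n α) : ‖B‖ = ⨆ i, ∑ j, ‖B i j‖ := by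
  simp [linfty_opNorm_def, Finset.sup_univ_eq_ciSup, NNReal.coe_iSup]

theorem rowSumNorm_eq_norm {k : ℕ} (B : Matrix (Fin k) (Fin k) ℝ) : rowSumNorm B = ‖B‖ := by
  simp [rowSumNorm, linfty_opNorm_eq_ciSup]

theorem Matrix.norm_map_ofReal (B : Matrix m n ℝ) : ‖B.map (algebraMap ℝ ℂ)‖ = ‖B‖ := by
  simp [linfty_opNorm_def]

theorem Matrix.norm_le_sum_entries_of_nonneg {B : Matrix m n ℝ} (hB : ∀ i j, 0 ≤ B i j) :
    ‖B‖ ≤ ∑ i, ∑ j, B i j := by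
  have hrow : ∀ i, 0 ≤ ∑ j, B i j := fun i => Finset.sum_nonneg fun j _ => hB i j
  rw [linfty_opNorm_eq_ciSup]
  refine Real.iSup_le (fun i => ?_) (Finset.sum_nonneg fun i _ => hrow i)
  simp only [Real.norm_of_nonneg (hB i _)]
  exact Finset.single_le_sum (fun i _ => hrow i) (Finset.mem_univ i)

theorem Matrix.sum_entries_le_card_mul_norm (B : Matrix m n ℝ) :
    ∑ i, ∑ j, B i j ≤ Fintype.card m * ‖B‖ := by
  rw [← nsmul_eq_mul, ← Finset.card_univ, ← Finset.sum_const]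
  refine Finset.sum_le_sum fun i _ => ?_
  calc ∑ j, B i j ≤ ∑ j, ‖B i j‖ := Finset.sum_le_sum fun j _ => Real.le_norm_self _
    _ ≤ ‖B‖ := by
      rw [linfty_opNorm_eq_ciSup]
      exact le_ciSup (f := fun i => ∑ j, ‖B i j‖) (Set.finite_range _).bddAbove i

theorem Matrix.sum_mul_norm_le_card_mul_norm_sum_smul {κ : Type*} [Fintype κ] (c : κ → ℝ)
    (B : κ → Matrix m n ℝ) (hc : ∀ x, 0 ≤ c x) (hB : ∀ x i j, 0 ≤ B x i j) :
    ∑ x, c x * ‖B x‖ ≤ Fintype.card m * ‖∑ x, c x • B x‖ := by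
  calc ∑ x, c x * ‖B x‖ ≤ ∑ x, c x * ∑ i, ∑ j, B x i j :=
        Finset.sum_le_sum fun x _ =>
          mul_le_mul_of_nonneg_left (norm_le_sum_entries_of_nonneg (hB x)) (hc x)
    _ = ∑ i, ∑ j, (∑ x, c x • B x) i j := by
        simp only [Matrix.sum_apply, Matrix.smul_apply, smul_eq_mul, Finset.mul_sum]
        rw [Finset.sum_comm]
        exact Finset.sum_congr rfl fun i _ => Finset.sum_comm
    _ ≤ _ := sum_entries_le_card_mul_norm _

theorem tendsto_norm_pow_rpow_specRad [DecidableEq m] (M : Matrix m m ℝ) :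
    Tendsto (fun k : ℕ => ‖M ^ k‖ ^ ((1 : ℝ) / k)) atTop (𝓝 (specRad M)) := by
  have hfin : spectralRadius ℂ (M.map (algebraMap ℝ ℂ)) ≠ ⊤ := by
    -- for empty `m` we have `‖1‖ = 0`, so the bound `ρ(a) ≤ ‖a‖` is not available there
    cases isEmpty_or_nonempty m
    · simp [spectralRadius, spectrum.of_subsingleton]
    · exact ((spectrum.spectralRadius_le_nnnorm _).trans_lt ENNReal.coe_lt_top).ne
  have := (ENNReal.tendsto_toReal hfin).comp
    (spectrum.pow_norm_pow_one_div_tendsto_nhds_spectralRadius (M.map (algebraMap ℝ ℂ)))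
  refine this.congr fun k => ?_
  rw [Function.comp_apply, ENNReal.toReal_ofReal (by positivity), ← RingHom.mapMatrix_apply,
    ← map_pow, RingHom.mapMatrix_apply, norm_map_ofReal]

end LinftyOpNorm

theorem tendsto_rpow_one_div_of_le_of_le_mul {a b : ℕ → ℝ} {C L : ℝ}
    (ha : Tendsto (fun k : ℕ => a k ^ ((1 : ℝ) / k)) atTop (𝓝 L)) (ha0 : ∀ k, 0 ≤ a k)
    (hab : ∀ k, a k ≤ b k) (hbC : ∀ k, b k ≤ C * a k) :
    Tendsto (fun k : ℕ => b k ^ ((1 : ℝ) / k)) atTop (𝓝 L) := by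
  set C' := max C 1
  have hC' : 0 < C' := lt_of_lt_of_le one_pos (le_max_right C 1)
  have hroot : Tendsto (fun k : ℕ => C' ^ ((1 : ℝ) / k)) atTop (𝓝 1) := by
    simpa using tendsto_const_nhds.rpow tendsto_one_div_atTop_nhds_zero_nat (Or.inl hC'.ne')
  have hupper : Tendsto (fun k : ℕ => (C' * a k) ^ ((1 : ℝ) / k)) atTop (𝓝 L) := by
    simpa [Real.mul_rpow hC'.le (ha0 _)] using hroot.mul ha
  refine tendsto_of_tendsto_of_tendsto_of_le_of_le ha hupper
    (fun k => Real.rpow_le_rpow (ha0 k) (hab k) (by positivity))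
    (fun k => Real.rpow_le_rpow ((ha0 k).trans (hab k)) ?_ (by positivity))
  exact (hbC k).trans (mul_le_mul_of_nonneg_right (le_max_left C 1) (ha0 k))

theorem stmt9_general {n : ℕ} {ι : Type*} [Fintype ι]
    (A : ι → Matrix (Fin n) (Fin n) ℝ) (hA : ∀ f i j, 0 ≤ A f i j)
    (μ : ι → ℝ) (hμpos : ∀ f, 0 < μ f) :
    Filter.Tendsto
      (fun k : ℕ =>
        (∑ w : Fin k → ι, (∏ m, μ (w m)) * rowSumNorm (wordProd A w)) ^ ((1 : ℝ) / k))
      Filter.atTop (nhds (specRad (∑ f, μ f • A f))) := by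
  have hweight : ∀ {k} (w : Fin k → ι), 0 ≤ ∏ m, μ (w m) := fun w =>
    Finset.prod_nonneg fun m _ => (hμpos (w m)).le
  refine tendsto_rpow_one_div_of_le_of_le_mul (C := n)
    (tendsto_norm_pow_rpow_specRad _) (fun k => norm_nonneg _) (fun k => ?_) (fun k => ?_)
  · rw [← sum_prod_smul_wordProd]
    refine (norm_sum_le _ _).trans_eq (Finset.sum_congr rfl fun w _ => ?_)
    rw [norm_smul, rowSumNorm_eq_norm, Real.norm_of_nonneg (hweight w)]
  · simp only [rowSumNorm_eq_norm, ← sum_prod_smul_wordProd]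
    simpa using sum_mul_norm_le_card_mul_norm_sum_smul _ _ hweight (wordProd_nonneg A hA)

theorem stmt9 {n : ℕ} {ι : Type*} [Fintype ι]
    (A : ι → Matrix (Fin n) (Fin n) ℝ) (hA : ∀ f i j, 0 ≤ A f i j)
    (μ : ι → ℝ) (hμpos : ∀ f, 0 < μ f) (hμ1 : ∑ f, μ f = 1) :
    Filter.Tendsto
      (fun k : ℕ =>
        (∑ w : Fin k → ι, (∏ m, μ (w m)) * rowSumNorm (wordProd A w)) ^ ((1 : ℝ) / k))
      Filter.atTop (nhds (specRad (∑ f, μ f • A f))) :=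
  stmt9_general A hA μ hμpos
end
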